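/- arXiv:1205.0796 — 5 statements merged into one kernel-verified Lean document; each statement's English description precedes it below -/
import Mathlib

section
/- Let L_1, ..., L_n be positive reals and define Q̃(x) = ∑ M(k_1,...,k_n) over all tuples (k_1,...,k_n) of nonnegative integers with L_1 k_1 + ... + L_n k_n ≤ x, for x ≥ 0, and Q̃(x) = 0 for x < 0. Then for all real x, Q̃(x) = Q̃(x - L_1) + ... + Q̃(x - L_n) + H(x), where H is the Heaviside step function (H(x) = 1 for x ≥ 0, H(x) = 0 for x < 0). -/
/-! Pascal's rule for multinomial coefficients, `M(k) = ∑_{i, k_i > 0} M(k - e_i)` for `k ≠ 0`,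
sorts the nonempty words counted by `Q̃(x)` by their last letter, and `k ↦ k - e_i` is a
bijection from the words ending in letter `i` onto the words counted by `Q̃(x - L_i)`. The empty
word contributes `H(x)`. -/

/-- Cumulative multinomial counting function: `Qt L x` is the sum of multinomial
coefficients `M(k)` over all tuples `k` of nonnegative integers with `∑ L i * k i ≤ x`
(and `Qt L x = 0` for `x < 0`, since then no tuple satisfies the constraint). -/
noncomputable def Qt {n : ℕ} (L : Fin n → ℝ) (x : ℝ) : ℝ :=
  ∑' k : Fin n → ℕ, if ∑ i, L i * k i ≤ x then (Nat.multinomial Finset.univ k : ℝ) else 0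

open Finset

namespace Nat

variable {α : Type*} [DecidableEq α] {s : Finset α} {i : α}

theorem prod_factorial_add_single (hi : i ∈ s) (f : α → ℕ) :
    ∏ j ∈ s, ((f + Pi.single i 1 : α → ℕ) j)! = (f i + 1) * ∏ j ∈ s, (f j)! := by
  rw [← mul_prod_erase s _ hi, ← mul_prod_erase s (fun j => (f j)!) hi,
    prod_congr rfl fun j hj => by rw [Pi.add_apply, Pi.single_eq_of_ne (ne_of_mem_erase hj),
      add_zero]]
  simp [factorial_succ, mul_assoc]

theorem succ_mul_multinomial_add_single (hi : i ∈ s) (f : α → ℕ) :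
    (f i + 1) * multinomial s (f + Pi.single i 1) = (∑ j ∈ s, f j + 1) * multinomial s f := by
  have hsum : ∑ j ∈ s, (f + Pi.single i 1 : α → ℕ) j = ∑ j ∈ s, f j + 1 := by
    simp [sum_add_distrib, hi]
  refine Nat.eq_of_mul_eq_mul_left (prod_pos (s := s) fun j _ => (f j).factorial_pos) ?_
  calc (∏ j ∈ s, (f j)!) * ((f i + 1) * multinomial s (f + Pi.single i 1))
      = (∑ j ∈ s, (f + Pi.single i 1 : α → ℕ) j)! := by
        rw [← multinomial_spec, prod_factorial_add_single hi]; ring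
    _ = (∏ j ∈ s, (f j)!) * ((∑ j ∈ s, f j + 1) * multinomial s f) := by
        rw [hsum, factorial_succ, ← multinomial_spec]; ring

theorem sub_single_add_single {f : α → ℕ} (hf : 0 < f i) :
    f - Pi.single i 1 + Pi.single i 1 = f := by
  ext j
  rcases eq_or_ne j i with rfl | hj
  · simp; omega
  · simp [hj]

theorem mul_multinomial_eq_sum_mul_multinomial_sub_single (hi : i ∈ s) {f : α → ℕ}
    (hf : 0 < f i) :
    f i * multinomial s f = (∑ j ∈ s, f j) * multinomial s (f - Pi.single i 1) := by
  have hf' := sub_single_add_single hf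
  have hsum : ∑ j ∈ s, f j = ∑ j ∈ s, (f - Pi.single i 1 : α → ℕ) j + 1 := by
    conv_lhs => rw [← hf']
    simp [sum_add_distrib, hi]
  have hfi : f i = (f - Pi.single i 1 : α → ℕ) i + 1 := by simp; omega
  have := succ_mul_multinomial_add_single hi (f - Pi.single i 1)
  rwa [hf', ← hfi, ← hsum] at this

theorem multinomial_eq_sum_multinomial_sub_single {f : α → ℕ} (hf : ∑ j ∈ s, f j ≠ 0) :
    multinomial s f = ∑ i ∈ s, if 0 < f i then multinomial s (f - Pi.single i 1) else 0 := by
  refine Nat.eq_of_mul_eq_mul_left (Nat.pos_of_ne_zero hf) ?_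
  rw [mul_sum, sum_mul]
  refine sum_congr rfl fun i hi => ?_
  split_ifs with h
  · exact mul_multinomial_eq_sum_mul_multinomial_sub_single hi h
  · simp_all

end Nat

section WeightedSum

variable {ι : Type*} [Fintype ι] (L : ι → ℝ)

theorem finite_setOf_sum_mul_le (hL : ∀ i, 0 < L i) (x : ℝ) :
    {k : ι → ℕ | ∑ i, L i * k i ≤ x}.Finite := by
  refine (Set.Finite.pi fun i => Set.finite_Iic ⌊x / L i⌋₊).subset fun k hk i _ => ?_
  refine Nat.le_floor ((le_div_iff₀ (hL i)).2 ?_)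
  calc (k i : ℝ) * L i = L i * k i := mul_comm _ _
    _ ≤ ∑ j, L j * k j :=
        single_le_sum (fun j _ => mul_nonneg (hL j).le (Nat.cast_nonneg _)) (mem_univ i)
    _ ≤ x := hk

theorem sum_mul_add_single [DecidableEq ι] (k : ι → ℕ) (i : ι) :
    ∑ j, L j * ((k + Pi.single i 1 : ι → ℕ) j : ℝ) = ∑ j, L j * k j + L i := by
  simp [mul_add, sum_add_distrib, Pi.single_apply]

end WeightedSum

variable {n : ℕ} (L : Fin n → ℝ)

theorem Qt_sub_eq_tsum (x : ℝ) (i : Fin n) :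
    Qt L (x - L i) = ∑' k : Fin n → ℕ, if ∑ j, L j * k j ≤ x ∧ 0 < k i then
      (Nat.multinomial univ (k - Pi.single i 1) : ℝ) else 0 := by
  have hinj : Function.Injective (· + Pi.single i 1 : (Fin n → ℕ) → Fin n → ℕ) :=
    add_left_injective _
  rw [← hinj.tsum_eq]
  · refine tsum_congr fun k => ?_
    simp only [sum_mul_add_single, le_sub_iff_add_le]
    simp
  · intro k hk
    obtain ⟨-, hki⟩ : ∑ j, L j * k j ≤ x ∧ 0 < k i := by
      by_contra h
      exact hk (if_neg h)
    exact ⟨k - Pi.single i 1, Nat.sub_single_add_single hki⟩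

theorem Qt_summand_eq (x : ℝ) (k : Fin n → ℕ) :
    (if ∑ j, L j * k j ≤ x then (Nat.multinomial univ k : ℝ) else 0) =
      (if k = 0 then (if 0 ≤ x then 1 else 0) else 0) +
        ∑ i, if ∑ j, L j * k j ≤ x ∧ 0 < k i then
          (Nat.multinomial univ (k - Pi.single i 1) : ℝ) else 0 := by
  rcases eq_or_ne k 0 with rfl | hk
  · simp [Nat.multinomial]
  have hsum : ∑ j, k j ≠ 0 := by
    simpa [sum_eq_zero_iff, funext_iff] using hk
  rw [if_neg hk, zero_add]
  split_ifs with hx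
  · rw [Nat.multinomial_eq_sum_multinomial_sub_single hsum]
    simp [hx]
  · simp [hx]

theorem stmt3 (n : ℕ) (L : Fin n → ℝ) (hL : ∀ i, 0 < L i) (x : ℝ) :
    Qt L x = (∑ i, Qt L (x - L i)) + (if 0 ≤ x then (1 : ℝ) else 0) := by
  have hsummable (i : Fin n) : Summable fun k : Fin n → ℕ =>
      if ∑ j, L j * k j ≤ x ∧ 0 < k i then (Nat.multinomial univ (k - Pi.single i 1) : ℝ)
        else 0 :=
    summable_of_hasFiniteSupport <| (finite_setOf_sum_mul_le L hL x).subset fun k hk => by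
      by_contra h
      exact hk (if_neg fun h' => h h'.1)
  rw [Qt, funext (Qt_summand_eq L x),
    Summable.tsum_add (hasSum_ite_eq 0 _).summable (summable_sum fun i _ => hsummable i),
    tsum_ite_eq, Summable.tsum_finsetSum fun i _ => hsummable i, add_comm]
  simp only [Qt_sub_eq_tsum]
end

section
/- Let n > 1 and let L_1, ..., L_n be positive reals with ∑_{i=1}^n e^{-L_i} = 1. Let g : ℝ → ℝ satisfy g(x) = g(x - L_1) + ... + g(x - L_n) for all x ≥ L' := max_i L_i, and suppose there exist constants 0 < c_1 < c_2 such that c_1 < g(x)e^{-x} < c_2 for all 0 ≤ x ≤ L'. Then c_1 ≤ g(x)e^{-x} ≤ c_2 for all x ≥ 0. -/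
theorem stmt6 (n : ℕ) (hn : 1 < n) (L : Fin n → ℝ) (hL : ∀ i, 0 < L i)
    (hnorm : ∑ i, Real.exp (-L i) = 1)
    (L' : ℝ) (hL' : L' = Finset.univ.sup' (Finset.univ_nonempty_iff.mpr ⟨⟨0, by omega⟩⟩) L)
    (g : ℝ → ℝ)
    (hrec : ∀ x, L' ≤ x → g x = ∑ i, g (x - L i))
    (c₁ c₂ : ℝ) (hc₁ : 0 < c₁) (hc₁₂ : c₁ < c₂)
    (hbound : ∀ x, 0 ≤ x → x ≤ L' →
      c₁ < g x * Real.exp (-x) ∧ g x * Real.exp (-x) < c₂) :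
    ∀ x, 0 ≤ x → c₁ ≤ g x * Real.exp (-x) ∧ g x * Real.exp (-x) ≤ c₂ := by
  have hne : (Finset.univ : Finset (Fin n)).Nonempty :=
    Finset.univ_nonempty_iff.mpr ⟨⟨0, by omega⟩⟩
  set L'' : ℝ := Finset.univ.inf' hne L with hL''def
  have hL''pos : 0 < L'' := by
    rw [hL''def, Finset.lt_inf'_iff]
    intro i _; exact hL i
  have hL''le : ∀ i, L'' ≤ L i := fun i => Finset.inf'_le _ (Finset.mem_univ i)
  have hleL' : ∀ i, L i ≤ L' := fun i => hL' ▸ Finset.le_sup' L (Finset.mem_univ i)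
  have hL'pos : 0 < L' := lt_of_lt_of_le (hL ⟨0, by omega⟩) (hleL' _)
  have key : ∀ k : ℕ, ∀ x, 0 ≤ x → x ≤ L' + k * L'' →
      c₁ ≤ g x * Real.exp (-x) ∧ g x * Real.exp (-x) ≤ c₂ := by
    intro k
    induction k with
    | zero =>
      intro x hx hx'
      simp only [Nat.cast_zero, zero_mul, add_zero] at hx'
      exact ⟨(hbound x hx hx').1.le, (hbound x hx hx').2.le⟩
    | succ k ih =>
      intro x hx hx'
      by_cases h : x ≤ L' + k * L''
      · exact ih x hx h
      push_neg at h
      have hLx : L' ≤ x := by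
        have : (0:ℝ) ≤ k * L'' := by positivity
        linarith
      have heq : g x * Real.exp (-x)
          = ∑ i, (g (x - L i) * Real.exp (-(x - L i))) * Real.exp (-L i) := by
        rw [hrec x hLx, Finset.sum_mul]
        refine Finset.sum_congr rfl fun i _ => ?_
        rw [mul_assoc, ← Real.exp_add]
        ring_nf
      have hterm : ∀ i : Fin n,
          c₁ ≤ g (x - L i) * Real.exp (-(x - L i)) ∧
          g (x - L i) * Real.exp (-(x - L i)) ≤ c₂ := by
        intro i
        apply ih
        · linarith [hleL' i]
        · push_cast at hx' ⊢
          have := hL''le i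
          linarith
      constructor
      · calc c₁ = ∑ i, c₁ * Real.exp (-L i) := by
              rw [← Finset.mul_sum, hnorm, mul_one]
          _ ≤ _ := by
              rw [heq]
              exact Finset.sum_le_sum fun i _ =>
                mul_le_mul_of_nonneg_right (hterm i).1 (Real.exp_pos _).le
      · calc g x * Real.exp (-x)
            ≤ ∑ i, c₂ * Real.exp (-L i) := by
              rw [heq]
              exact Finset.sum_le_sum fun i _ =>
                mul_le_mul_of_nonneg_right (hterm i).2 (Real.exp_pos _).le
          _ = c₂ := by rw [← Finset.mul_sum, hnorm, mul_one]
  intro x hx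
  refine key ⌈x / L''⌉₊ x hx ?_
  have h1 : x / L'' ≤ (⌈x / L''⌉₊ : ℝ) := Nat.le_ceil _
  have h2 : x ≤ (⌈x / L''⌉₊ : ℝ) * L'' := by
    rw [← div_le_iff₀ hL''pos]; exact h1
  linarith
end

section
/- Let n > 1 and L_1, ..., L_n > 0 with ∑_{i=1}^n e^{-L_i} = 1, and let Q̃(x) = ∑_{L_1 k_1 + ... + L_n k_n ≤ x} M(k_1,...,k_n) for x ≥ 0 (sum over tuples of nonnegative integers, M the multinomial coefficient). Then there exist constants c_1, c_2 such that c_1 < ln Q̃(x) - x < c_2 for all x ≥ 0. -/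
open Finset

theorem sub_single_add_single_of_ne_zero {α : Type*} [DecidableEq α] {k : α → ℕ} {i : α}
    (hi : k i ≠ 0) : k - Pi.single i 1 + Pi.single i 1 = k := by
  ext j
  rcases eq_or_ne j i with rfl | hj
  · simp only [Pi.add_apply, Pi.sub_apply, Pi.single_eq_same]; omega
  · simp [hj]

namespace Nat

variable {α : Type*} [DecidableEq α]

theorem succ_sum_mul_multinomial_eq {s : Finset α} {a : α} (ha : a ∈ s) (k : α → ℕ) :
    (∑ j ∈ s, k j + 1) * multinomial s k = (k a + 1) * multinomial s (k + Pi.single a 1) := by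
  have hrest : ∑ j ∈ s.erase a, (k + Pi.single a 1 : α → ℕ) j = ∑ j ∈ s.erase a, k j :=
    sum_congr rfl fun j hj => by simp [ne_of_mem_erase hj]
  have hmul : multinomial (s.erase a) (k + Pi.single a 1) = multinomial (s.erase a) k :=
    multinomial_congr fun j hj => by simp [ne_of_mem_erase hj]
  rw [← insert_erase ha, multinomial_insert (notMem_erase a s),
    multinomial_insert (notMem_erase a s), sum_insert (notMem_erase a s), hrest, hmul]
  simp only [Pi.add_apply, Pi.single_eq_same]
  have := add_one_mul_choose_eq (k a + ∑ j ∈ s.erase a, k j) (k a)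
  rw [show k a + 1 + ∑ j ∈ s.erase a, k j = k a + ∑ j ∈ s.erase a, k j + 1 by ring]
  linear_combination (multinomial (s.erase a) k) * this

variable [Fintype α]

theorem sum_mul_multinomial_sub_single {k : α → ℕ} {i : α} (hi : k i ≠ 0) :
    (∑ j, k j) * multinomial univ (k - Pi.single i 1) = k i * multinomial univ k := by
  have h := succ_sum_mul_multinomial_eq (mem_univ i) (k - Pi.single i 1)
  rw [sub_single_add_single_of_ne_zero hi] at h
  have hsum : ∑ j, (k - Pi.single i 1 : α → ℕ) j + 1 = ∑ j, k j := by
    conv_rhs => rw [← sub_single_add_single_of_ne_zero hi]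
    simp [sum_add_distrib]
  have hi' : (k - Pi.single i 1 : α → ℕ) i + 1 = k i := by
    simp only [Pi.sub_apply, Pi.single_eq_same]; omega
  rwa [hsum, hi'] at h

theorem multinomial_eq_sum_sub_single {k : α → ℕ} (hk : k ≠ 0) :
    multinomial univ k = ∑ i with k i ≠ 0, multinomial univ (k - Pi.single i 1) := by
  have hpos : 0 < ∑ j, k j := by
    obtain ⟨i, hi⟩ := Function.ne_iff.1 hk
    exact (Nat.pos_of_ne_zero hi).trans_le (single_le_sum (by simp) (mem_univ i))
  refine Nat.eq_of_mul_eq_mul_left hpos ?_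
  calc (∑ j, k j) * multinomial univ k = ∑ i with k i ≠ 0, k i * multinomial univ k := by
        rw [← sum_mul, sum_filter_ne_zero]
    _ = _ := by
        rw [mul_sum]
        exact sum_congr rfl fun i hi => (sum_mul_multinomial_sub_single (mem_filter.1 hi).2).symm

end Nat

section Sublevel

variable {ι : Type*} [Fintype ι] (L : ι → ℝ)

def weight (k : ι → ℕ) : ℝ := ∑ i, L i * k i

variable [DecidableEq ι]

theorem weight_add_single (k : ι → ℕ) (i : ι) :
    weight L (k + Pi.single i 1) = weight L k + L i := by
  simp [weight, mul_add, sum_add_distrib, Pi.single_apply]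

/-- The box only makes the set finite: it contains every tuple of weight `≤ x` once `L > 0`. -/
noncomputable def sublevel (x : ℝ) : Finset (ι → ℕ) :=
  (Fintype.piFinset fun i => range (⌈x / L i⌉₊ + 1)).filter (weight L · ≤ x)

variable {L}

theorem mem_sublevel (hL : ∀ i, 0 < L i) {x : ℝ} {k : ι → ℕ} :
    k ∈ sublevel L x ↔ weight L k ≤ x := by
  refine ⟨fun h => (mem_filter.1 h).2,
    fun h => mem_filter.2 ⟨Fintype.mem_piFinset.2 fun i => ?_, h⟩⟩
  have hi : L i * k i ≤ x :=
    (single_le_sum (f := fun j => L j * k j) (fun j _ => by have := hL j; positivity)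
      (mem_univ i)).trans h
  have : (k i : ℝ) ≤ ⌈x / L i⌉₊ := ((le_div_iff₀' (hL i)).2 hi).trans (Nat.le_ceil _)
  exact mem_range.2 (Nat.lt_succ_of_le (by exact_mod_cast this))

theorem sum_multinomial_sublevel_eq_one_add (hL : ∀ i, 0 < L i) {x : ℝ} (hx : 0 ≤ x) :
    ∑ k ∈ sublevel L x, (Nat.multinomial univ k : ℝ) =
      1 + ∑ i, ∑ k ∈ sublevel L (x - L i), (Nat.multinomial univ k : ℝ) := by
  have h0 : (0 : ι → ℕ) ∈ sublevel L x := (mem_sublevel hL).2 (by simp [weight, hx])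
  have hshift (i : ι) : ∑ k ∈ (sublevel L x).filter (· i ≠ 0),
      (Nat.multinomial univ (k - Pi.single i 1) : ℝ) =
        ∑ k ∈ sublevel L (x - L i), (Nat.multinomial univ k : ℝ) := by
    refine sum_nbij' (· - Pi.single i 1) (· + Pi.single i 1) ?_ ?_ ?_ ?_ fun _ _ => rfl
    · intro k hk
      obtain ⟨hkx, hki⟩ := mem_filter.1 hk
      have := weight_add_single L (k - Pi.single i 1) i
      rw [sub_single_add_single_of_ne_zero hki] at this
      rw [mem_sublevel hL] at hkx ⊢
      linarith
    · intro k hk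
      rw [mem_sublevel hL] at hk
      simp only [mem_filter, mem_sublevel hL, weight_add_single]
      exact ⟨by linarith, by simp⟩
    · intro k hk; exact sub_single_add_single_of_ne_zero (mem_filter.1 hk).2
    · intro k _; exact add_tsub_cancel_right k _
  have hpascal : ∑ k ∈ (sublevel L x).erase 0, (Nat.multinomial univ k : ℝ) =
      ∑ k ∈ sublevel L x, ∑ i with k i ≠ 0, (Nat.multinomial univ (k - Pi.single i 1) : ℝ) := by
    rw [← sum_erase (sublevel L x) (a := 0) (by simp)]
    exact sum_congr rfl fun k hk =>
      mod_cast Nat.multinomial_eq_sum_sub_single (ne_of_mem_erase hk)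
  rw [← add_sum_erase _ _ h0, hpascal,
    sum_comm' (t' := univ) (s' := fun i => (sublevel L x).filter (· i ≠ 0)) (by simp [and_comm])]
  simp only [hshift]
  simp [Nat.multinomial]

end Sublevel

section Qt

variable {n : ℕ} {L : Fin n → ℝ}

theorem Qt_eq_sum_sublevel (hL : ∀ i, 0 < L i) (x : ℝ) :
    Qt L x = ∑ k ∈ sublevel L x, (Nat.multinomial univ k : ℝ) := by
  change (∑' k, if weight L k ≤ x then (Nat.multinomial univ k : ℝ) else 0) = _
  rw [tsum_eq_sum (s := sublevel L x) fun k hk => if_neg (mt (mem_sublevel hL).2 hk)]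
  exact sum_congr rfl fun k hk => if_pos ((mem_sublevel hL).1 hk)

theorem Qt_nonneg (x : ℝ) : 0 ≤ Qt L x :=
  tsum_nonneg fun k => by split_ifs <;> positivity

theorem Qt_monotone (hL : ∀ i, 0 < L i) : Monotone (Qt L) := by
  intro x y hxy
  simp only [Qt_eq_sum_sublevel hL]
  refine sum_le_sum_of_subset_of_nonneg (fun k hk => ?_) fun _ _ _ => by positivity
  rw [mem_sublevel hL] at hk ⊢
  exact hk.trans hxy

theorem Qt_eq_one_add_sum (hL : ∀ i, 0 < L i) {x : ℝ} (hx : 0 ≤ x) :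
    Qt L x = 1 + ∑ i, Qt L (x - L i) := by
  simp only [Qt_eq_sum_sublevel hL]
  exact sum_multinomial_sublevel_eq_one_add hL hx

end Qt

open Real

theorem nonneg_induction_of_step {P : ℝ → Prop} {M δ : ℝ} (hδ : 0 < δ)
    (hbase : ∀ x, 0 ≤ x → x ≤ M → P x)
    (hstep : ∀ x, M < x → (∀ y, 0 ≤ y → y ≤ x - δ → P y) → P x) {x : ℝ} (hx : 0 ≤ x) :
    P x := by
  have key (m : ℕ) : ∀ y, 0 ≤ y → y ≤ M + m * δ → P y := by
    induction m with
    | zero => simpa using hbase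
    | succ m ih =>
      intro y hy₀ hy
      rcases le_or_gt y M with hyM | hyM
      · exact hbase y hy₀ hyM
      · exact hstep y hyM fun z hz₀ hz => ih z hz₀ (by push_cast at hy; linarith)
  obtain ⟨m, hm⟩ := exists_nat_ge ((x - M) / δ)
  exact key m x hx (by rw [div_le_iff₀ hδ] at hm; linarith)

section Renewal

variable {ι : Type*} [Fintype ι] {L : ι → ℝ} {M : ℝ} {f : ℝ → ℝ}

theorem renewal_induction [Nonempty ι] (hL : ∀ i, 0 < L i) (hM : ∀ i, L i ≤ M) {P : ℝ → Prop}
    (hbase : ∀ x, 0 ≤ x → x ≤ M → P x) (hstep : ∀ x, M < x → (∀ i, P (x - L i)) → P x)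
    {x : ℝ} (hx : 0 ≤ x) : P x := by
  obtain ⟨i₀, hi₀⟩ := Finite.exists_min L
  refine nonneg_induction_of_step (hL i₀) hbase (fun y hy ih => hstep y hy fun i => ?_) hx
  exact ih _ (by linarith [hM i]) (by linarith [hi₀ i])

theorem sum_exp_sub_eq (hnorm : ∑ i, exp (-L i) = 1) (x : ℝ) :
    ∑ i, exp (x - L i) = exp x := by
  simp_rw [sub_eq_add_neg, exp_add, ← mul_sum, hnorm, mul_one]

theorem exp_sub_le_of_renewal [Nonempty ι] (hL : ∀ i, 0 < L i) (hnorm : ∑ i, exp (-L i) = 1)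
    (hM : ∀ i, L i ≤ M) (hf₀ : ∀ x, 0 ≤ f x) (hrec : ∀ x, 0 ≤ x → f x = 1 + ∑ i, f (x - L i))
    {x : ℝ} (hx : 0 ≤ x) : exp (x - M) ≤ f x := by
  have hM₀ : 0 < M := (hL _).trans_le (hM (Classical.arbitrary ι))
  refine renewal_induction (P := fun x => exp (x - M) ≤ f x) hL hM (fun x hx hxM => ?_)
    (fun x hxM ih => ?_) hx
  · have : 1 ≤ f x := by
      rw [hrec x hx]; linarith [sum_nonneg fun i (_ : i ∈ univ) => hf₀ (x - L i)]
    linarith [exp_le_one_iff.2 (sub_nonpos.2 hxM)]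
  · calc exp (x - M) = ∑ i, exp (x - L i - M) := by
          rw [← sum_exp_sub_eq hnorm (x - M)]; simp_rw [sub_right_comm]
      _ ≤ 1 + ∑ i, f (x - L i) := by linarith [sum_le_sum fun i (_ : i ∈ univ) => ih i]
      _ = f x := (hrec x (by linarith)).symm

theorem le_mul_exp_sub_one_of_renewal (hcard : 2 ≤ Fintype.card ι) (hL : ∀ i, 0 < L i)
    (hnorm : ∑ i, exp (-L i) = 1) (hM : ∀ i, L i ≤ M) (hf₀ : ∀ x, 0 ≤ f x) (hmono : Monotone f)
    (hrec : ∀ x, 0 ≤ x → f x = 1 + ∑ i, f (x - L i)) {x : ℝ} (hx : 0 ≤ x) :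
    f x ≤ (f M + 1) * exp x - 1 := by
  have : Nonempty ι := Fintype.card_pos_iff.1 (by omega)
  have hM₀ : 0 < M := (hL _).trans_le (hM (Classical.arbitrary ι))
  refine renewal_induction (P := fun x => f x ≤ (f M + 1) * exp x - 1) hL hM
    (fun x hx hxM => ?_) (fun x hxM ih => ?_) hx
  · nlinarith [hmono hxM, one_le_exp hx, hf₀ M]
  · have hcard' : (2 : ℝ) ≤ Fintype.card ι := mod_cast hcard
    calc f x = 1 + ∑ i, f (x - L i) := hrec x (by linarith)
      _ ≤ 1 + ∑ i, ((f M + 1) * exp (x - L i) - 1) := by gcongr with i; exact ih i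
      _ = (f M + 1) * exp x + 1 - Fintype.card ι := by
          rw [sum_sub_distrib, ← mul_sum, sum_exp_sub_eq hnorm]; simp; ring
      _ ≤ (f M + 1) * exp x - 1 := by linarith

end Renewal

theorem stmt7 (n : ℕ) (hn : 1 < n) (L : Fin n → ℝ) (hL : ∀ i, 0 < L i)
    (hnorm : ∑ i, Real.exp (-L i) = 1) :
    ∃ c₁ c₂ : ℝ, ∀ x : ℝ, 0 ≤ x →
      c₁ < Real.log (Qt L x) - x ∧ Real.log (Qt L x) - x < c₂ := by
  have : Nonempty (Fin n) := ⟨⟨0, by omega⟩⟩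
  obtain ⟨M, hM⟩ := Finite.exists_le L
  have hrec (x : ℝ) (hx : 0 ≤ x) := Qt_eq_one_add_sum hL hx
  refine ⟨-M - 1, log (Qt L M + 1), fun x hx => ?_⟩
  have hlower := exp_sub_le_of_renewal hL hnorm hM Qt_nonneg hrec hx
  have hupper := le_mul_exp_sub_one_of_renewal (by rw [Fintype.card_fin]; omega) hL hnorm hM
    Qt_nonneg (Qt_monotone hL) hrec hx
  have hQ : 0 < Qt L x := (exp_pos _).trans_le hlower
  constructor
  · linarith [(le_log_iff_exp_le hQ).2 hlower]
  · have hb : 0 < Qt L M + 1 := by linarith [Qt_nonneg (L := L) M]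
    rw [sub_lt_iff_lt_add, log_lt_iff_lt_exp hQ, exp_add, exp_log hb]
    linarith
end

section
/- Let p_1, ..., p_n (n > 1) be positive reals with ∑ p_i = 1 - p_0 for some p_0 ∈ (0,1), and let γ > 0 satisfy ∑ p_i^γ = 1. Define Q(f), for f ∈ (0, p_0], as the number of finite words w over the alphabet {1,...,n} (including the empty word) whose probability Pr(w) = p_0 ∏_j p_{w_j} satisfies Pr(w) ≥ f. Then there exist constants c_1, c_2 such that c_1 < ln Q(p_0 e^{-x}) - γ x < c_2 for all x ≥ 0. -/
/-!
Put `q i = p i ^ γ`, a probability vector, so that `Pr(w) ≥ p₀ e^{-x}` iff the `q`-weight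
`∏ q_{w_j}` of `w` is at least `t = e^{-γx}`. Splitting off the first letter, the number `N t` of
words of `q`-weight at least `t` satisfies `N t = 1 + ∑ i, N (t / q i)` for `t ≤ 1`, and `N t = 0`
for `t > 1`; hence `g = (n - 1) N + 1` satisfies `g t = ∑ i, g (t / q i)`, i.e. `t g(t)` is the
`q`-average of the values `(t / q i) g (t / q i)`. For `t > 1` we have `t g(t) = t`, so induction on
the threshold keeps `t g(t)` in `(1, 1 / min q]`, whence `N(e^{-γx}) ≍ e^{γx}`.
-/

/-- Probability of the word `w` over an `n`-letter alphabet in the monkey model: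
`Pr(w) = p₀ * ∏_j p_{w_j}`. -/
noncomputable def wordProb {n : ℕ} (p : Fin n → ℝ) (p₀ : ℝ) (w : List (Fin n)) : ℝ :=
  p₀ * (w.map p).prod

open Real

section WeightedWords

variable {ι : Type*} {q : ι → ℝ}

def heavyWords (q : ι → ℝ) (t : ℝ) : Set (List ι) := {w | t ≤ (w.map q).prod}

lemma mem_heavyWords {t : ℝ} {w : List ι} : w ∈ heavyWords q t ↔ t ≤ (w.map q).prod := Iff.rfl

lemma nil_mem_heavyWords {t : ℝ} (ht : t ≤ 1) : [] ∈ heavyWords q t := by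
  simpa [mem_heavyWords] using ht

lemma cons_mem_heavyWords (hq : ∀ i, 0 < q i) {t : ℝ} {i : ι} {w : List ι} :
    i :: w ∈ heavyWords q t ↔ w ∈ heavyWords q (t / q i) := by
  simp only [mem_heavyWords, List.map_cons, List.prod_cons, div_le_iff₀' (hq i)]

lemma prod_map_le_pow_length (hq : ∀ i, 0 ≤ q i) {M : ℝ} (hqM : ∀ i, q i ≤ M) (w : List ι) :
    (w.map q).prod ≤ M ^ w.length := by
  simpa using List.prod_map_le_prod_map₀ q (fun _ => M) (fun i _ => hq i) (fun i _ => hqM i)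

lemma heavyWords_eq_empty (hq : ∀ i, 0 < q i) (hq1 : ∀ i, q i < 1) {t : ℝ} (ht : 1 < t) :
    heavyWords q t = ∅ := by
  refine Set.eq_empty_of_forall_notMem fun w hw => ?_
  have := prod_map_le_pow_length (fun i => (hq i).le) (fun i => (hq1 i).le) w
  rw [one_pow] at this
  exact (ht.trans_le (mem_heavyWords.1 hw)).not_ge this

lemma exists_forall_le_of_lt_one [Finite ι] (hq : ∀ i, 0 < q i) (hq1 : ∀ i, q i < 1) :
    ∃ M, 0 < M ∧ M < 1 ∧ ∀ i, q i ≤ M := by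
  rcases isEmpty_or_nonempty ι with hι | hι
  · exact ⟨1 / 2, by norm_num, by norm_num, isEmptyElim⟩
  · obtain ⟨i, hi⟩ := Finite.exists_max q
    exact ⟨q i, hq i, hq1 i, hi⟩

lemma heavyWords_finite [Finite ι] (hq : ∀ i, 0 < q i) (hq1 : ∀ i, q i < 1) {t : ℝ}
    (ht : 0 < t) : (heavyWords q t).Finite := by
  obtain ⟨M, hM0, hM1, hqM⟩ := exists_forall_le_of_lt_one hq hq1
  obtain ⟨k, hk⟩ := exists_pow_lt_of_lt_one ht hM1
  refine (List.finite_length_lt ι k).subset fun w hw => ?_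
  change w.length < k
  by_contra! hlen
  have := prod_map_le_pow_length (fun i => (hq i).le) hqM w
  have := pow_le_pow_of_le_one hM0.le hM1.le hlen
  linarith [mem_heavyWords.1 hw]

/-- Well founded because dividing the threshold by a weight multiplies it by `≥ 1 / max q > 1`. -/
theorem threshold_induction [Finite ι] (hq : ∀ i, 0 < q i) (hq1 : ∀ i, q i < 1) {P : ℝ → Prop}
    (one_lt : ∀ t, 1 < t → P t) (div : ∀ t, 0 < t → t ≤ 1 → (∀ i, P (t / q i)) → P t)
    {t : ℝ} (ht : 0 < t) : P t := by
  obtain ⟨M, hM0, hM1, hqM⟩ := exists_forall_le_of_lt_one hq hq1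
  obtain ⟨k, hk⟩ := exists_pow_lt_of_lt_one ht hM1
  induction k generalizing t with
  | zero => exact one_lt t (by simpa using hk)
  | succ k ih =>
    rcases le_or_gt t 1 with ht1 | ht1
    · refine div t ht ht1 fun i => ih (div_pos ht (hq i)) ?_
      rw [lt_div_iff₀ (hq i)]
      calc M ^ k * q i ≤ M ^ k * M := by gcongr; exact hqM i
        _ < t := by rwa [← pow_succ]
    · exact one_lt t ht1

def heavyWordsEquiv (hq : ∀ i, 0 < q i) {t : ℝ} (ht : t ≤ 1) :
    heavyWords q t ≃ Option (Σ i, heavyWords q (t / q i)) where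
  toFun
    | ⟨[], _⟩ => none
    | ⟨i :: w, hw⟩ => some ⟨i, w, (cons_mem_heavyWords hq).1 hw⟩
  invFun
    | none => ⟨[], nil_mem_heavyWords ht⟩
    | some ⟨i, w, hw⟩ => ⟨i :: w, (cons_mem_heavyWords hq).2 hw⟩
  left_inv := by rintro ⟨_ | ⟨i, w⟩, hw⟩ <;> rfl
  right_inv := by rintro (_ | ⟨i, w, hw⟩) <;> rfl

lemma card_heavyWords [Fintype ι] (hq : ∀ i, 0 < q i) (hq1 : ∀ i, q i < 1) {t : ℝ}
    (ht0 : 0 < t) (ht1 : t ≤ 1) :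
    Nat.card (heavyWords q t) = ∑ i, Nat.card (heavyWords q (t / q i)) + 1 := by
  have := fun i => (heavyWords_finite hq hq1 (div_pos ht0 (hq i))).to_subtype
  rw [Nat.card_congr (heavyWordsEquiv hq ht1), Finite.card_option, Nat.card_sigma]

/-- Unlike the count of heavy words, this satisfies the homogeneous recursion
`g t = ∑ i, g (t / q i)` for `t ≤ 1`. -/
noncomputable def shiftedCount [Fintype ι] (q : ι → ℝ) (t : ℝ) : ℝ :=
  (Fintype.card ι - 1) * Nat.card (heavyWords q t) + 1

lemma shiftedCount_of_one_lt [Fintype ι] (hq : ∀ i, 0 < q i) (hq1 : ∀ i, q i < 1) {t : ℝ}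
    (ht : 1 < t) : shiftedCount q t = 1 := by
  simp [shiftedCount, heavyWords_eq_empty hq hq1 ht]

lemma shiftedCount_eq_sum [Fintype ι] (hq : ∀ i, 0 < q i) (hq1 : ∀ i, q i < 1) {t : ℝ}
    (ht0 : 0 < t) (ht1 : t ≤ 1) : shiftedCount q t = ∑ i, shiftedCount q (t / q i) := by
  simp only [shiftedCount, card_heavyWords hq hq1 ht0 ht1, Finset.sum_add_distrib,
    ← Finset.mul_sum, Finset.sum_const, Finset.card_univ]
  push_cast
  ring

lemma mul_shiftedCount_eq_sum [Fintype ι] (hq : ∀ i, 0 < q i) (hq1 : ∀ i, q i < 1) {t : ℝ}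
    (ht0 : 0 < t) (ht1 : t ≤ 1) :
    t * shiftedCount q t = ∑ i, q i * (t / q i * shiftedCount q (t / q i)) := by
  rw [shiftedCount_eq_sum hq hq1 ht0 ht1, Finset.mul_sum]
  refine Finset.sum_congr rfl fun i _ => ?_
  field_simp [(hq i).ne']

lemma one_lt_mul_shiftedCount [Fintype ι] (hq : ∀ i, 0 < q i) (hq1 : ∀ i, q i < 1)
    (hsum : ∑ i, q i = 1) {t : ℝ} (ht : 0 < t) : 1 < t * shiftedCount q t := by
  refine threshold_induction (P := fun t => 1 < t * shiftedCount q t) hq hq1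
    (fun t ht => ?_) (fun t ht0 ht1 ih => ?_) ht
  · rwa [shiftedCount_of_one_lt hq hq1 ht, mul_one]
  · rw [mul_shiftedCount_eq_sum hq hq1 ht0 ht1]
    calc (1 : ℝ) = ∑ i, q i * 1 := by simp [hsum]
      _ < _ := Finset.sum_lt_sum_of_nonempty
          (Finset.nonempty_of_sum_ne_zero (hsum ▸ one_ne_zero))
          fun i _ => mul_lt_mul_of_pos_left (ih i) (hq i)

lemma mul_mul_shiftedCount_le_one [Fintype ι] (hq : ∀ i, 0 < q i) (hq1 : ∀ i, q i < 1)
    (hsum : ∑ i, q i = 1) {m : ℝ} (hm0 : 0 ≤ m) (hm : ∀ i, m ≤ q i) {t : ℝ} (ht : 0 < t)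
    (hmt : m * t ≤ 1) : m * (t * shiftedCount q t) ≤ 1 := by
  revert hmt
  refine threshold_induction (P := fun t => m * t ≤ 1 → m * (t * shiftedCount q t) ≤ 1) hq hq1
    (fun t ht hmt => ?_) (fun t ht0 ht1 ih _ => ?_) ht
  · rwa [shiftedCount_of_one_lt hq hq1 ht, mul_one]
  · have hmt i : m * (t / q i) ≤ 1 := by
      rw [mul_div_assoc', div_le_one (hq i)]
      nlinarith [hm i]
    rw [mul_shiftedCount_eq_sum hq hq1 ht0 ht1, Finset.mul_sum]
    calc ∑ i, m * (q i * (t / q i * shiftedCount q (t / q i)))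
        = ∑ i, q i * (m * (t / q i * shiftedCount q (t / q i))) := by
          simp only [mul_left_comm]
      _ ≤ ∑ i, q i * 1 := Finset.sum_le_sum fun i _ =>
          mul_le_mul_of_nonneg_left (ih i (hmt i)) (hq i).le
      _ = 1 := by simp [hsum]

lemma lt_one_of_sum_eq_one [Fintype ι] (hq : ∀ i, 0 < q i) (hsum : ∑ i, q i = 1)
    (hcard : 1 < Fintype.card ι) (i : ι) : q i < 1 := by
  classical
  obtain ⟨j, hji⟩ := Fintype.exists_ne_of_one_lt_card hcard i
  have := Finset.sum_le_sum_of_subset_of_nonneg (Finset.subset_univ ({i, j} : Finset ι))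
    (fun k _ _ => (hq k).le)
  rw [Finset.sum_pair hji.symm, hsum] at this
  linarith [hq j]

theorem mul_card_heavyWords_mem_Ioo [Fintype ι] (hq : ∀ i, 0 < q i) (hsum : ∑ i, q i = 1)
    (hcard : 1 < Fintype.card ι) {m : ℝ} (hm0 : 0 < m) (hm : ∀ i, m ≤ q i) {t : ℝ}
    (ht0 : 0 < t) (ht1 : t ≤ 1) :
    t * Nat.card (heavyWords q t) ∈
      Set.Ioo (1 / (Fintype.card ι : ℝ)) (1 / ((Fintype.card ι - 1) * m)) := by
  have hq1 := lt_one_of_sum_eq_one hq hsum hcard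
  obtain ⟨i⟩ : Nonempty ι := Fintype.card_pos_iff.1 (by omega)
  have hlow := one_lt_mul_shiftedCount hq hq1 hsum ht0
  have hup := mul_mul_shiftedCount_le_one hq hq1 hsum hm0.le hm ht0
    (by nlinarith [hm i, hq1 i])
  have : Nonempty (heavyWords q t) := ⟨⟨[], nil_mem_heavyWords ht1⟩⟩
  have := (heavyWords_finite hq hq1 ht0).to_subtype
  have hN : (1 : ℝ) ≤ Nat.card (heavyWords q t) := by exact_mod_cast Nat.card_pos
  have hc : (1 : ℝ) < Fintype.card ι := by exact_mod_cast hcard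
  unfold shiftedCount at hlow hup
  constructor
  · rw [div_lt_iff₀ (by linarith)]
    nlinarith
  · rw [lt_div_iff₀ (by nlinarith)]
    nlinarith

end WeightedWords

lemma le_wordProb_iff {n : ℕ} {p : Fin n → ℝ} (hp : ∀ i, 0 < p i) {p₀ : ℝ} (hp₀ : 0 < p₀)
    {γ : ℝ} (hγ : 0 < γ) (x : ℝ) (w : List (Fin n)) :
    p₀ * exp (-x) ≤ wordProb p p₀ w ↔ w ∈ heavyWords (fun i => p i ^ γ) (exp (-(γ * x))) := by
  rw [wordProb, mul_le_mul_iff_right₀ hp₀, mem_heavyWords,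
    Real.list_prod_map_rpow' _ _ (fun i _ => (hp i).le),
    ← Real.rpow_le_rpow_iff (exp_pos _).le (List.prod_pos (by simp [hp])).le hγ,
    ← Real.exp_mul, neg_mul, mul_comm]

theorem stmt8_general (n : ℕ) (hn : 1 < n) (p : Fin n → ℝ) (hp : ∀ i, 0 < p i)
    (p₀ : ℝ) (hp₀ : 0 < p₀ ∧ p₀ < 1)
    (γ : ℝ) (hγ : 0 < γ) (hroot : ∑ i, p i ^ γ = 1) :
    ∃ c₁ c₂ : ℝ, ∀ x : ℝ, 0 ≤ x →
      c₁ < Real.log (Nat.card {w : List (Fin n) // p₀ * Real.exp (-x) ≤ wordProb p p₀ w}) - γ * x ∧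
      Real.log (Nat.card {w : List (Fin n) // p₀ * Real.exp (-x) ≤ wordProb p p₀ w}) - γ * x < c₂ := by
  set q : Fin n → ℝ := fun i => p i ^ γ
  have hq i : 0 < q i := Real.rpow_pos_of_pos (hp i) γ
  have : Nonempty (Fin n) := ⟨⟨0, by omega⟩⟩
  obtain ⟨i₀, hi₀⟩ := Finite.exists_min q
  refine ⟨-log n, -log ((n - 1) * q i₀), fun x hx => ?_⟩
  set t := exp (-(γ * x))
  set N := Nat.card (heavyWords q t)
  have hQ : Nat.card {w // p₀ * exp (-x) ≤ wordProb p p₀ w} = N :=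
    Nat.card_congr (Equiv.subtypeEquivRight (le_wordProb_iff hp hp₀.1 hγ x))
  obtain ⟨hlow, hup⟩ := mul_card_heavyWords_mem_Ioo hq hroot (by simpa using hn) (hq i₀) hi₀
    (exp_pos _) (exp_le_one_iff.2 (neg_nonpos.2 (mul_nonneg hγ.le hx)))
  simp only [Fintype.card_fin] at hlow hup
  have htN : 0 < t * N := (by positivity : (0 : ℝ) < 1 / n).trans hlow
  have hlog : log N - γ * x = log (t * N) := by
    rw [log_mul (exp_pos _).ne' (pos_of_mul_pos_right htN (exp_pos _).le).ne', log_exp]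
    ring
  rw [hQ, hlog]
  constructor
  · have := log_lt_log (by positivity) hlow
    rwa [one_div, log_inv] at this
  · have := log_lt_log htN hup
    rwa [one_div, log_inv] at this

theorem stmt8 (n : ℕ) (hn : 1 < n) (p : Fin n → ℝ) (hp : ∀ i, 0 < p i)
    (p₀ : ℝ) (hp₀ : 0 < p₀ ∧ p₀ < 1) (hsum : ∑ i, p i = 1 - p₀)
    (γ : ℝ) (hγ : 0 < γ) (hroot : ∑ i, p i ^ γ = 1) :
    ∃ c₁ c₂ : ℝ, ∀ x : ℝ, 0 ≤ x →
      c₁ < Real.log (Nat.card {w : List (Fin n) // p₀ * Real.exp (-x) ≤ wordProb p p₀ w}) - γ * x ∧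
      Real.log (Nat.card {w : List (Fin n) // p₀ * Real.exp (-x) ≤ wordProb p p₀ w}) - γ * x < c₂ :=
  stmt8_general n hn p hp p₀ hp₀ γ hγ hroot
end

section
/- Under the hypotheses of the monkey model (p_1,...,p_n > 0, n > 1, ∑ p_i = 1 - p_0, p_0 ∈ (0,1), γ the root of ∑ p_i^γ = 1), let p(r) denote the probability of the word of rank r in the list of all words (including the empty word) sorted in nonincreasing order of probability. Then there exist constants c_1, c_2 such that c_1 < ln p(r) + (ln r)/γ < c_2 for all ranks r ≥ 1. -/
namespace Monkey

variable {n : ℕ} (q : Fin n → ℝ)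

noncomputable def Qp (w : List (Fin n)) : ℝ := (w.map q).prod

def S (s : ℝ) : Set (List (Fin n)) := {w | s ≤ Qp q w}

noncomputable def N (s : ℝ) : ℕ := (S q s).ncard

lemma Qp_nil : Qp q ([] : List (Fin n)) = 1 := by simp [Qp]

lemma Qp_cons (i : Fin n) (w : List (Fin n)) : Qp q (i :: w) = q i * Qp q w := by
  simp [Qp]

variable {q} {M : ℝ} (hq : ∀ i, 0 < q i) (hqM : ∀ i, q i ≤ M) (hM1 : M < 1) (hM0 : 0 < M)

include hq in
lemma Qp_pos (w : List (Fin n)) : 0 < Qp q w := by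
  induction w with
  | nil => simp [Qp]
  | cons i w ih => rw [Qp_cons]; exact mul_pos (hq i) ih

include hq hqM hM0 in
lemma Qp_le_pow (w : List (Fin n)) : Qp q w ≤ M ^ w.length := by
  induction w with
  | nil => simp [Qp]
  | cons i w ih =>
    rw [Qp_cons, List.length_cons, pow_succ']
    exact mul_le_mul (hqM i) ih (Qp_pos hq w).le hM0.le

include hq hqM hM1 hM0 in
lemma Qp_le_one (w : List (Fin n)) : Qp q w ≤ 1 :=
  (Qp_le_pow hq hqM hM0 w).trans (pow_le_one₀ hM0.le hM1.le)

include hq hqM hM1 hM0 in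
lemma S_finite {s : ℝ} (hs : 0 < s) : (S q s).Finite := by
  obtain ⟨L, hL⟩ := exists_pow_lt_of_lt_one hs hM1
  apply (List.finite_length_lt (Fin n) L).subset
  intro w hw
  simp only [Set.mem_setOf_eq]
  by_contra h
  push_neg at h
  have h1 : M ^ w.length ≤ M ^ L := pow_le_pow_of_le_one hM0.le hM1.le h
  exact absurd (le_trans hw ((Qp_le_pow hq hqM hM0 w).trans h1)) (not_le.mpr hL)

lemma nil_mem_S {s : ℝ} (hs : s ≤ 1) : ([] : List (Fin n)) ∈ S q s := by
  simp [S, Qp_nil, hs]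

include hq hqM hM1 hM0 in
lemma N_pos {s : ℝ} (hs0 : 0 < s) (hs : s ≤ 1) : 1 ≤ N (q := q) s := by
  rw [N]
  have := (Set.ncard_pos (S_finite hq hqM hM1 hM0 hs0)).mpr ⟨[], nil_mem_S hs⟩
  omega

include hq hqM hM1 hM0 in
lemma N_eq_zero {s : ℝ} (hs : 1 < s) : N (q := q) s = 0 := by
  rw [N, Set.ncard_eq_zero (S_finite hq hqM hM1 hM0 (lt_trans one_pos hs))]
  ext w
  simp only [S, Set.mem_setOf_eq, Set.mem_empty_iff_false, iff_false, not_le]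
  exact lt_of_le_of_lt (Qp_le_one hq hqM hM1 hM0 w) hs

include hq hqM hM1 hM0 in
lemma N_rec {s : ℝ} (hs0 : 0 < s) (hs : s ≤ 1) :
    N (q := q) s = 1 + ∑ i, N (q := q) (s / q i) := by
  classical
  have hfin : ∀ t : ℝ, 0 < t → (S q t).Finite := fun t ht => S_finite hq hqM hM1 hM0 ht
  have key : (hfin s hs0).toFinset =
      insert [] (Finset.univ.biUnion
        fun i => ((hfin (s / q i) (div_pos hs0 (hq i))).toFinset.image (List.cons i))) := by
    ext w
    simp only [Set.Finite.mem_toFinset, Finset.mem_insert, Finset.mem_biUnion,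
      Finset.mem_univ, Finset.mem_image, true_and]
    cases w with
    | nil => simp [nil_mem_S hs]
    | cons i w =>
      constructor
      · intro hw
        refine Or.inr ⟨i, w, ?_, rfl⟩
        simp only [S, Set.mem_setOf_eq] at hw ⊢
        rw [Qp_cons] at hw
        exact (div_le_iff₀' (hq i)).mpr hw
      · rintro (h | ⟨j, x, hx, hjx⟩)
        · exact absurd h (by simp)
        · injection hjx with h1 h2
          subst h1; subst h2
          simp only [S, Set.mem_setOf_eq] at hx ⊢
          rw [Qp_cons]
          exact ((div_le_iff₀' (hq _)).mp hx)
  have hN : ∀ t : ℝ, (ht : 0 < t) → N (q := q) t = ((hfin t ht).toFinset).card := by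
    intro t ht
    rw [N, Set.ncard_eq_toFinset_card _ (hfin t ht)]
  have hdisj : ∀ i ∈ (Finset.univ : Finset (Fin n)), ∀ j ∈ Finset.univ, i ≠ j →
      Disjoint ((hfin (s / q i) (div_pos hs0 (hq i))).toFinset.image (List.cons i))
        ((hfin (s / q j) (div_pos hs0 (hq j))).toFinset.image (List.cons j)) := by
    intro i _ j _ hij
    simp only [Finset.disjoint_left, Finset.mem_image]
    rintro w ⟨x, _, rfl⟩ ⟨y, _, hy⟩
    exact hij (by injection hy with h1 h2; exact h1.symm)
  rw [hN s hs0, key, Finset.card_insert_of_notMem (by simp), Finset.card_biUnion hdisj]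
  have : ∀ i : Fin n,
      ((hfin (s / q i) (div_pos hs0 (hq i))).toFinset.image (List.cons i)).card
        = N (q := q) (s / q i) := by
    intro i
    rw [Finset.card_image_of_injective _ (fun a b h => by injection h),
      hN (s / q i) (div_pos hs0 (hq i))]
  rw [Finset.sum_congr rfl (fun i _ => this i), add_comm]

include hq hqM hM1 hM0 in
lemma N_upper (hqsum : ∑ i, q i = 1) (hMmem : ∃ i, q i = M)
    {A : ℝ} (hA2 : 2 ≤ A) (hA : 1 ≤ A * (1 - M)) :
    ∀ k : ℕ, ∀ s : ℝ, M ^ k < s → s ≤ 1 → (N (q := q) s : ℝ) + 1 ≤ A / s := by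
  intro k
  induction k with
  | zero =>
    intro s h1 h2
    simp only [pow_zero] at h1
    linarith
  | succ k ih =>
    intro s hks hs1
    have hs0 : 0 < s := lt_trans (pow_pos hM0 _) hks
    have hA0 : 0 < A := lt_of_lt_of_le two_pos hA2
    by_cases hsM : M < s
    · have hsub : S q s ⊆ {([] : List (Fin n))} := by
        intro w hw
        cases w with
        | nil => rfl
        | cons i w' =>
          exfalso
          have h1 : Qp q (i :: w') ≤ M ^ (i :: w').length := Qp_le_pow hq hqM hM0 _
          have h2 : M ^ (i :: w').length ≤ M ^ 1 :=
            pow_le_pow_of_le_one hM0.le hM1.le (by simp)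
          simp only [pow_one] at h2
          exact absurd (le_trans hw (le_trans h1 h2)) (not_le.mpr hsM)
      have hle1 : N (q := q) s ≤ 1 :=
        le_trans (Set.ncard_le_ncard hsub (Set.finite_singleton _)) (by simp)
      have : (N (q := q) s : ℝ) + 1 ≤ 2 := by
        have h' : (N (q := q) s : ℝ) ≤ 1 := by exact_mod_cast hle1
        linarith
      refine le_trans this (le_trans hA2 ?_)
      rw [le_div_iff₀ hs0]
      nlinarith
    · push_neg at hsM
      classical
      set T := Finset.univ.filter (fun i => s ≤ q i) with hT
      obtain ⟨i₀, hi₀⟩ := hMmem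
      have hi₀T : i₀ ∈ T := by
        rw [hT, Finset.mem_filter]
        exact ⟨Finset.mem_univ _, hi₀ ▸ hsM⟩
      have hcard : 1 ≤ T.card := Finset.card_pos.mpr ⟨i₀, hi₀T⟩
      have hzero : ∀ i ∉ T, N (q := q) (s / q i) = 0 := by
        intro i hi
        rw [hT, Finset.mem_filter] at hi
        push_neg at hi
        have : q i < s := hi (Finset.mem_univ _)
        exact N_eq_zero hq hqM hM1 hM0 ((one_lt_div (hq i)).mpr this)
      have hIH : ∀ i ∈ T, (N (q := q) (s / q i) : ℝ) + 1 ≤ A * q i / s := by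
        intro i hiT
        rw [hT, Finset.mem_filter] at hiT
        have h1 : s / q i ≤ 1 := (div_le_one (hq i)).mpr hiT.2
        have h2 : M ^ k < s / q i := by
          have hstep : M ^ (k + 1) / q i < s / q i := by gcongr; exact hq i
          refine lt_of_le_of_lt ?_ hstep
          rw [le_div_iff₀ (hq i), pow_succ]
          exact mul_le_mul_of_nonneg_left (hqM i) (pow_nonneg hM0.le k)
        have := ih (s / q i) h2 h1
        rwa [div_div_eq_mul_div] at this
      have hrec := N_rec hq hqM hM1 hM0 hs0 hs1
      have hsumN : ∑ i, N (q := q) (s / q i) = ∑ i ∈ T, N (q := q) (s / q i) :=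
        (Finset.sum_subset (Finset.subset_univ T) (fun i _ hi => hzero i hi)).symm
      have hsum1 : ∑ i ∈ T, q i ≤ 1 := by
        rw [← hqsum]
        exact Finset.sum_le_sum_of_subset_of_nonneg (Finset.subset_univ T)
          (fun i _ _ => (hq i).le)
      have hsumIH : ∑ i ∈ T, ((N (q := q) (s / q i) : ℝ) + 1) ≤ (A / s) * ∑ i ∈ T, q i := by
        rw [Finset.mul_sum]
        refine Finset.sum_le_sum (fun i hi => ?_)
        rw [div_mul_eq_mul_div]
        exact hIH i hi
      have hNs : (N (q := q) s : ℝ) = 1 + ∑ i ∈ T, (N (q := q) (s / q i) : ℝ) := by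
        rw [hrec, hsumN]
        push_cast
        ring
      have hexp : (N (q := q) s : ℝ) + 1 =
          2 - T.card + ∑ i ∈ T, ((N (q := q) (s / q i) : ℝ) + 1) := by
        rw [hNs, Finset.sum_add_distrib]
        simp
        ring
      rw [hexp]
      rcases Nat.lt_or_ge T.card 2 with hc | hc
      · have hc1 : T.card = 1 := by omega
        obtain ⟨j, hj⟩ := Finset.card_eq_one.mp hc1
        have hsum2 : ∑ i ∈ T, q i ≤ M := by
          rw [hj, Finset.sum_singleton]
          exact hqM j
        have h1 : (A / s) * ∑ i ∈ T, q i ≤ (A / s) * M :=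
          mul_le_mul_of_nonneg_left hsum2 (div_nonneg hA0.le hs0.le)
        have h2 : A ≤ A / s := by
          rw [le_div_iff₀ hs0]; nlinarith
        have h3 : (A / s) * M + 1 ≤ A / s := by
          have : 1 ≤ (A / s) * (1 - M) := by
            calc (1:ℝ) ≤ A * (1 - M) := hA
            _ ≤ (A / s) * (1 - M) := mul_le_mul_of_nonneg_right h2 (by linarith)
          nlinarith
        rw [hc1]
        push_cast
        linarith [le_trans hsumIH h1]
      · have h1 : (A / s) * ∑ i ∈ T, q i ≤ A / s := by
          have := mul_le_mul_of_nonneg_left hsum1 (div_nonneg hA0.le hs0.le)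
          linarith [this]
        have h2 : (2:ℝ) ≤ T.card := by exact_mod_cast hc
        linarith [le_trans hsumIH h1]

include hq hqM hM1 hM0 in
lemma N_lower (hqsum : ∑ i, q i = 1) {a m : ℝ} (hm : ∀ i, m ≤ q i) (hm0 : 0 < m) (hm1 : m < 1)
    (ha0 : 0 < a) (ha1 : a * (n - 1) ≤ 1) (ha2 : a * (1 - m) ≤ m) :
    ∀ k : ℕ, ∀ s : ℝ, M ^ k < s → s ≤ 1 → a / s ≤ (N (q := q) s : ℝ) + a := by
  intro k
  induction k with
  | zero =>
    intro s h1 h2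
    simp only [pow_zero] at h1
    linarith
  | succ k ih =>
    intro s hks hs1
    have hs0 : 0 < s := lt_trans (pow_pos hM0 _) hks
    by_cases hsm : m < s
    · have hN1 : 1 ≤ N (q := q) s := N_pos hq hqM hM1 hM0 hs0 hs1
      have h1 : a / s < a / m := div_lt_div_of_pos_left ha0 hm0 hsm
      have h2 : a / m ≤ 1 + a := by
        rw [div_le_iff₀ hm0]
        nlinarith
      have : (1:ℝ) ≤ (N (q := q) s : ℝ) := by exact_mod_cast hN1
      linarith
    · push_neg at hsm
      have hIH : ∀ i : Fin n, a * q i / s ≤ (N (q := q) (s / q i) : ℝ) + a := by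
        intro i
        have h1 : s / q i ≤ 1 := (div_le_one (hq i)).mpr (le_trans hsm (hm i))
        have h2 : M ^ k < s / q i := by
          have hstep : M ^ (k + 1) / q i < s / q i := by gcongr; exact hq i
          refine lt_of_le_of_lt ?_ hstep
          rw [le_div_iff₀ (hq i), pow_succ]
          exact mul_le_mul_of_nonneg_left (hqM i) (pow_nonneg hM0.le k)
        have := ih (s / q i) h2 h1
        rwa [div_div_eq_mul_div] at this
      have hrec := N_rec hq hqM hM1 hM0 hs0 hs1
      have hsum : ∑ i, (a * q i / s) ≤ ∑ i, ((N (q := q) (s / q i) : ℝ) + a) :=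
        Finset.sum_le_sum (fun i _ => hIH i)
      have hL : ∑ i, (a * q i / s) = a / s := by
        rw [← Finset.sum_div, ← Finset.mul_sum, hqsum, mul_one]
      have hR : ∑ i, ((N (q := q) (s / q i) : ℝ) + a) =
          (∑ i, (N (q := q) (s / q i) : ℝ)) + n * a := by
        rw [Finset.sum_add_distrib]
        simp [Finset.card_univ]
      have hNs : (N (q := q) s : ℝ) = 1 + ∑ i, (N (q := q) (s / q i) : ℝ) := by
        rw [hrec]
        push_cast
        ring
      rw [hL, hR] at hsum
      have hna : (n:ℝ) * a - a ≤ 1 := by nlinarith [ha1]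
      linarith [hsum, hNs]

end Monkey

theorem stmt9 (n : ℕ) (hn : 1 < n) (p : Fin n → ℝ) (hp : ∀ i, 0 < p i)
    (p₀ : ℝ) (hp₀ : 0 < p₀ ∧ p₀ < 1) (hsum : ∑ i, p i = 1 - p₀)
    (γ : ℝ) (hγ : 0 < γ) (hroot : ∑ i, p i ^ γ = 1)
    -- `e` enumerates all words in nonincreasing order of probability;
    -- the word of rank `r` (for `r ≥ 1`) is `e (r - 1)`.
    (e : ℕ → List (Fin n)) (he : Function.Bijective e)
    (hmono : ∀ r s : ℕ, r ≤ s → wordProb p p₀ (e s) ≤ wordProb p p₀ (e r)) :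
    ∃ c₁ c₂ : ℝ, ∀ r : ℕ, 1 ≤ r →
      c₁ < Real.log (wordProb p p₀ (e (r - 1))) + Real.log r / γ ∧
      Real.log (wordProb p p₀ (e (r - 1))) + Real.log r / γ < c₂ := by
  classical
  open Monkey in
  set q : Fin n → ℝ := fun i => p i ^ γ with hqdef
  have hq : ∀ i, 0 < q i := fun i => Real.rpow_pos_of_pos (hp i) γ
  have hqsum : ∑ i, q i = 1 := hroot
  obtain ⟨iM, -, hiM⟩ := Finset.exists_max_image Finset.univ q
    ⟨⟨0, by omega⟩, Finset.mem_univ _⟩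
  obtain ⟨im, -, him⟩ := Finset.exists_min_image Finset.univ q
    ⟨⟨0, by omega⟩, Finset.mem_univ _⟩
  set M := q iM with hMdef
  set m := q im with hmdef
  have hqM : ∀ i, q i ≤ M := fun i => hiM i (Finset.mem_univ _)
  have hm : ∀ i, m ≤ q i := fun i => him i (Finset.mem_univ _)
  have hM0 : 0 < M := hq iM
  have hm0 : 0 < m := hq im
  have hM1 : M < 1 := by
    have herase : q iM + ∑ i ∈ Finset.univ.erase iM, q i = 1 := by
      rw [Finset.add_sum_erase _ q (Finset.mem_univ iM)]
      exact hqsum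
    have hne : (Finset.univ.erase iM).Nonempty := by
      rw [← Finset.card_pos, Finset.card_erase_of_mem (Finset.mem_univ iM),
        Finset.card_univ, Fintype.card_fin]
      omega
    have hpos : 0 < ∑ i ∈ Finset.univ.erase iM, q i :=
      Finset.sum_pos (fun i _ => hq i) hne
    linarith
  have hm1 : m < 1 := lt_of_le_of_lt (hm iM) hM1
  -- constants
  set A : ℝ := max 2 (1 / (1 - M)) with hAdef
  have hA2 : (2:ℝ) ≤ A := le_max_left _ _
  have h1M : (0:ℝ) < 1 - M := by linarith
  have hA : (1:ℝ) ≤ A * (1 - M) := by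
    have h1 : 1 / (1 - M) ≤ A := le_max_right _ _
    calc (1:ℝ) = (1 / (1 - M)) * (1 - M) := by field_simp
    _ ≤ A * (1 - M) := mul_le_mul_of_nonneg_right h1 h1M.le
  have hA0 : (0:ℝ) < A := lt_of_lt_of_le two_pos hA2
  have hn1 : (0:ℝ) < (n:ℝ) - 1 := by
    have : (2:ℝ) ≤ (n:ℝ) := by exact_mod_cast hn
    linarith
  set a : ℝ := min (1 / ((n:ℝ) - 1)) (m / (1 - m)) with hadef
  have ha0 : 0 < a := lt_min (by positivity) (div_pos hm0 (by linarith))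
  have ha1 : a * ((n:ℝ) - 1) ≤ 1 := by
    have h1 : a ≤ 1 / ((n:ℝ) - 1) := min_le_left _ _
    calc a * ((n:ℝ) - 1) ≤ (1 / ((n:ℝ) - 1)) * ((n:ℝ) - 1) :=
          mul_le_mul_of_nonneg_right h1 hn1.le
    _ = 1 := by field_simp
  have ha2 : a * (1 - m) ≤ m := by
    have h1 : a ≤ m / (1 - m) := min_le_right _ _
    have h1m : (0:ℝ) < 1 - m := by linarith
    calc a * (1 - m) ≤ (m / (1 - m)) * (1 - m) := mul_le_mul_of_nonneg_right h1 h1m.le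
    _ = m := by field_simp
  have hUpper : ∀ s : ℝ, 0 < s → s ≤ 1 → (N (q := q) s : ℝ) + 1 ≤ A / s := by
    intro s hs hs1
    obtain ⟨k, hk⟩ := exists_pow_lt_of_lt_one hs hM1
    exact N_upper hq hqM hM1 hM0 hqsum ⟨iM, rfl⟩ hA2 hA k s hk hs1
  have hLower : ∀ s : ℝ, 0 < s → s ≤ 1 → a / s ≤ (N (q := q) s : ℝ) + a := by
    intro s hs hs1
    obtain ⟨k, hk⟩ := exists_pow_lt_of_lt_one hs hM1
    exact N_lower hq hqM hM1 hM0 hqsum hm hm0 hm1 ha0 ha1 ha2 k s hk hs1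
  -- relation between Qp q and products of p
  have hPpos : ∀ w : List (Fin n), 0 < (w.map p).prod := fun w => Qp_pos hp w
  have hQP : ∀ w : List (Fin n), Qp q w = ((w.map p).prod) ^ γ := by
    intro w
    induction w with
    | nil => simp [Qp, Real.one_rpow]
    | cons i w ih =>
      rw [Qp_cons, List.map_cons, List.prod_cons,
        Real.mul_rpow (hp i).le (hPpos w).le, ih]
  have hmonoQ : ∀ r s : ℕ, r ≤ s → Qp q (e s) ≤ Qp q (e r) := by
    intro r s h
    have h1 := hmono r s h
    rw [wordProb, wordProb] at h1
    have h2 : ((e s).map p).prod ≤ ((e r).map p).prod :=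
      le_of_mul_le_mul_left h1 hp₀.1
    rw [hQP, hQP]
    exact Real.rpow_le_rpow (hPpos _).le h2 hγ.le
  -- the constants
  set β : ℝ := min (a * m / (1 + a)) m with hβdef
  have hβ0 : 0 < β := lt_min (by positivity) hm0
  refine ⟨Real.log p₀ + Real.log β / γ - 1, Real.log p₀ + Real.log A / γ + 1, ?_⟩
  intro r hr
  set w : List (Fin n) := e (r - 1) with hwdef
  set v : ℝ := Qp q w with hvdef
  have hv0 : 0 < v := Qp_pos hq w
  have hv1 : v ≤ 1 := Qp_le_one hq hqM hM1 hM0 w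
  -- step 1 : r ≤ N v
  have hrN : r ≤ N (q := q) v := by
    have hGsub : ↑((Finset.range r).image e) ⊆ S q v := by
      intro w' hw'
      simp only [Finset.coe_image, Finset.coe_range, Set.mem_image, Set.mem_Iio] at hw'
      obtain ⟨j, hj, rfl⟩ := hw'
      exact hmonoQ j (r - 1) (by omega)
    calc r = ((Finset.range r).image e).card := by
          rw [Finset.card_image_of_injective _ he.1, Finset.card_range]
    _ = (↑((Finset.range r).image e) : Set (List (Fin n))).ncard :=
          (Set.ncard_coe_finset _).symm
    _ ≤ N (q := q) v := Set.ncard_le_ncard hGsub (S_finite hq hqM hM1 hM0 hv0)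
  have hrR : (1:ℝ) ≤ (r:ℝ) := by exact_mod_cast hr
  -- upper bound : v * r ≤ A
  have hvrA : v * r ≤ A := by
    have h1 := hUpper v hv0 hv1
    have h2 : (r:ℝ) ≤ (N (q := q) v : ℝ) := by exact_mod_cast hrN
    have h3 : (r:ℝ) ≤ A / v := by linarith
    have := (le_div_iff₀ hv0).mp h3
    linarith
  -- lower bound : β ≤ v * r
  have hβvr : β ≤ v * r := by
    by_cases hvm : v ≤ m
    · -- words with Qp ≥ v/m are among the first r-1
      have hstrict : S q (v / m) ⊆ ↑((Finset.range (r - 1)).image e) := by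
        intro w' hw'
        have hvv : v < v / m := by
          rw [lt_div_iff₀ hm0]
          have := mul_lt_mul_of_pos_left hm1 hv0
          linarith
        have hvQ : v < Qp q w' := lt_of_lt_of_le hvv hw'
        obtain ⟨j, rfl⟩ := he.2 w'
        simp only [Finset.coe_image, Finset.coe_range, Set.mem_image, Set.mem_Iio]
        refine ⟨j, ?_, rfl⟩
        by_contra hj
        push_neg at hj
        exact absurd (hmonoQ (r - 1) j hj) (not_le.mpr hvQ)
      have hN2 : N (q := q) (v / m) ≤ r - 1 := by
        calc N (q := q) (v / m)
            ≤ (↑((Finset.range (r - 1)).image e) : Set (List (Fin n))).ncard :=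
              Set.ncard_le_ncard hstrict ((Finset.range (r - 1)).image e).finite_toSet
        _ = ((Finset.range (r - 1)).image e).card := Set.ncard_coe_finset _
        _ ≤ r - 1 := le_trans Finset.card_image_le (le_of_eq (Finset.card_range _))
      have hvm1 : v / m ≤ 1 := (div_le_one hm0).mpr hvm
      have hvm0 : 0 < v / m := div_pos hv0 hm0
      have h1 := hLower (v / m) hvm0 hvm1
      have h2 : a / (v / m) = a * m / v := by
        field_simp
      have h3 : (N (q := q) (v / m) : ℝ) ≤ (r:ℝ) - 1 := by
        have : ((N (q := q) (v / m) : ℕ) : ℝ) ≤ ((r - 1 : ℕ) : ℝ) := by exact_mod_cast hN2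
        rwa [Nat.cast_sub hr, Nat.cast_one] at this
      have h4 : a * m / v ≤ (r:ℝ) - 1 + a := by rw [← h2]; linarith
      have h5 : (r:ℝ) - 1 + a ≤ (r:ℝ) * (1 + a) := by
        nlinarith [mul_nonneg ha0.le (by linarith : (0:ℝ) ≤ (r:ℝ) - 1)]
      have h6 : a * m ≤ v * ((r:ℝ) * (1 + a)) := by
        have := (div_le_iff₀ hv0).mp (le_trans h4 h5)
        linarith
      have h7 : a * m / (1 + a) ≤ v * r := by
        rw [div_le_iff₀ (by linarith : (0:ℝ) < 1 + a)]
        calc a * m ≤ v * ((r:ℝ) * (1 + a)) := h6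
        _ = v * r * (1 + a) := by ring
      exact le_trans (min_le_left _ _) h7
    · push_neg at hvm
      refine le_trans (min_le_right _ _) ?_
      have := mul_le_mul_of_nonneg_left hrR hv0.le
      linarith
  -- logarithms
  have hlogwp : Real.log (wordProb p p₀ w) = Real.log p₀ + Real.log ((w.map p).prod) := by
    rw [wordProb, Real.log_mul (ne_of_gt hp₀.1) (ne_of_gt (hPpos w))]
  have hlogv : Real.log v = γ * Real.log ((w.map p).prod) := by
    rw [hvdef, hQP, Real.log_rpow (hPpos w)]
  have hlogP : Real.log ((w.map p).prod) = Real.log v / γ := by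
    rw [hlogv]; field_simp
  have hE : Real.log (wordProb p p₀ (e (r - 1))) + Real.log r / γ =
      Real.log p₀ + Real.log (v * r) / γ := by
    rw [← hwdef, hlogwp, hlogP, Real.log_mul (ne_of_gt hv0) (ne_of_gt (lt_of_lt_of_le one_pos hrR)), add_div]
    ring
  rw [hE]
  constructor
  · have h1 : Real.log β ≤ Real.log (v * r) := Real.log_le_log hβ0 hβvr
    have h2 : Real.log β / γ ≤ Real.log (v * r) / γ := by gcongr
    linarith
  · have h1 : Real.log (v * r) ≤ Real.log A := Real.log_le_log (by positivity) hvrA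
    have h2 : Real.log (v * r) / γ ≤ Real.log A / γ := by gcongr
    linarith
end
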